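/- arXiv:2109.10148 — 4 statements merged into one kernel-verified Lean document; each statement's English description precedes it below -/
import Mathlib

section
/- If three vectors $y_1,y_2,y_3$ in Minkowski space satisfy $\det_{y_1,y_2,y_3}=0$, then for pairwise distinct $i,j,k$ the two diagonal cofactors $\det_{y_i,y_j}$ and $\det_{y_i,y_k}$ cannot be nonzero with opposite signs, i.e. $\det_{y_i,y_j}\cdot\det_{y_i,y_k}\geq 0$. -/
/-- Minkowski inner product on `ℝ^{1,3}` with signature `(+,-,-,-)`. -/
noncomputable def mink (x y : Fin 4 → ℝ) : ℝ :=
  x 0 * y 0 - x 1 * y 1 - x 2 * y 2 - x 3 * y 3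

/-- `2×2` Gram determinant `det_{a,b} = a²b² − (ab)²`. -/
noncomputable def gram2 (a b : Fin 4 → ℝ) : ℝ := mink a a * mink b b - (mink a b) ^ 2

/-- `3×3` Gram determinant of the Minkowski inner products. -/
noncomputable def gram3 (y1 y2 y3 : Fin 4 → ℝ) : ℝ :=
  mink y1 y1 * mink y2 y2 * mink y3 y3
    - mink y1 y1 * (mink y2 y3) ^ 2 - mink y2 y2 * (mink y1 y3) ^ 2
    - mink y3 y3 * (mink y1 y2) ^ 2
    + 2 * mink y1 y2 * mink y1 y3 * mink y2 y3

/-- Cofactor `Λ_k` of `(y_i y_j)`: `Λ_k = (y_i y_k)(y_j y_k) − y_k²(y_i y_j)`. -/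
noncomputable def Lam (yi yj yk : Fin 4 → ℝ) : ℝ :=
  mink yi yk * mink yj yk - mink yk yk * mink yi yj

/-- If `det_{y1,y2,y3} = 0`, the diagonal cofactors `det_{y_i,y_j}` and `det_{y_i,y_k}`
cannot be nonzero with opposite signs (stated for `i = 1`; the general case follows by
symmetry since `y1,y2,y3` are arbitrary). -/
theorem gram2_same_sign (y1 y2 y3 : Fin 4 → ℝ) (h : gram3 y1 y2 y3 = 0) :
    0 ≤ gram2 y1 y2 * gram2 y1 y3 := by
  have key : gram2 y1 y2 * gram2 y1 y3
      = Lam y2 y3 y1 ^ 2 + mink y1 y1 * gram3 y1 y2 y3 := by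
    simp only [gram2, gram3, Lam, mink]; ring
  rw [key, h, mul_zero, add_zero]
  positivity
end

section
/- If three vectors $y_1,y_2,y_3$ in Minkowski space satisfy $\det_{y_1,y_2,y_3}=0$ and $\det_{y_i,y_j}=0$ for some distinct $i,j$, then the cofactors $\Lambda_i$ and $\Lambda_j$ both vanish. -/
/-- If `det_{y1,y2,y3} = 0` and `det_{y1,y2} = 0`, then the cofactors
`Λ_1 = (y2 y1)(y3 y1) − y1²(y2 y3)` and `Λ_2 = (y1 y2)(y3 y2) − y2²(y1 y3)` both vanish. -/
theorem cofactors_vanish (y1 y2 y3 : Fin 4 → ℝ)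
    (h3 : gram3 y1 y2 y3 = 0) (h2 : gram2 y1 y2 = 0) :
    Lam y2 y3 y1 = 0 ∧ Lam y1 y3 y2 = 0 := by
  have k1 : Lam y2 y3 y1 ^ 2
      = gram2 y1 y3 * gram2 y1 y2 - mink y1 y1 * gram3 y1 y2 y3 := by
    simp only [Lam, gram2, gram3, mink]; ring
  have k2 : Lam y1 y3 y2 ^ 2
      = gram2 y2 y3 * gram2 y1 y2 - mink y2 y2 * gram3 y1 y2 y3 := by
    simp only [Lam, gram2, gram3, mink]; ring
  rw [h2, h3] at k1 k2
  simp only [mul_zero, sub_zero] at k1 k2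
  exact ⟨pow_eq_zero_iff (by norm_num) |>.mp k1, pow_eq_zero_iff (by norm_num) |>.mp k2⟩
end

section
/- Let $y_1,y_2,y_3$ be vectors in Minkowski space $\mathbb{R}^{1,3}$ with $\det_{y_1,y_2}\neq 0$. Then $\det_{y_1,y_2,y_3}=0$ if and only if there exist real numbers $\alpha,\beta$ and a lightlike vector $\ell$ ($\ell^2=0$) with $(\ell y_1)=(\ell y_2)=0$ such that $y_3=\alpha y_1+\beta y_2+\ell$. -/
/-! The Gram determinant is multiplicative under orthogonal splitting: writing
`y₃ = α y₁ + β y₂ + ℓ` with `ℓ ⊥ y₁, y₂` (always possible by Cramer's rule when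
`det_{y₁,y₂} ≠ 0`), one has `det_{y₁,y₂,y₃} = det_{y₁,y₂} · ℓ²`. Hence the
`3×3` determinant vanishes exactly when the orthogonal component `ℓ` is lightlike. -/

section Mink

variable (x y z : Fin 4 → ℝ) (c : ℝ)

theorem mink_comm : mink x y = mink y x := by
  unfold mink; ring

theorem mink_add_left : mink (x + y) z = mink x z + mink y z := by
  simp only [mink, Pi.add_apply]; ring

theorem mink_sub_left : mink (x - y) z = mink x z - mink y z := by
  simp only [mink, Pi.sub_apply]; ring

theorem mink_smul_left : mink (c • x) y = c * mink x y := by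
  simp only [mink, Pi.smul_apply, smul_eq_mul]; ring

theorem mink_add_right : mink x (y + z) = mink x y + mink x z := by
  rw [mink_comm, mink_add_left, mink_comm y, mink_comm z]

theorem mink_smul_right : mink x (c • y) = c * mink x y := by
  rw [mink_comm, mink_smul_left, mink_comm]

end Mink

theorem gram3_add_orthogonal {y1 y2 ℓ : Fin 4 → ℝ} (α β : ℝ)
    (h1 : mink ℓ y1 = 0) (h2 : mink ℓ y2 = 0) :
    gram3 y1 y2 (α • y1 + β • y2 + ℓ) = gram2 y1 y2 * mink ℓ ℓ := by
  have h1' : mink y1 ℓ = 0 := by rw [mink_comm, h1]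
  have h2' : mink y2 ℓ = 0 := by rw [mink_comm, h2]
  simp only [gram3, gram2, mink_add_left, mink_add_right, mink_smul_left, mink_smul_right,
    h1, h2, h1', h2', mink_comm y2 y1]
  ring

theorem exists_eq_add_orthogonal {y1 y2 : Fin 4 → ℝ} (h : gram2 y1 y2 ≠ 0) (y3 : Fin 4 → ℝ) :
    ∃ (α β : ℝ) (ℓ : Fin 4 → ℝ), mink ℓ y1 = 0 ∧ mink ℓ y2 = 0 ∧
      y3 = α • y1 + β • y2 + ℓ := by
  set α := (mink y3 y1 * mink y2 y2 - mink y3 y2 * mink y1 y2) / gram2 y1 y2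
  set β := (mink y3 y2 * mink y1 y1 - mink y3 y1 * mink y1 y2) / gram2 y1 y2
  refine ⟨α, β, y3 - α • y1 - β • y2, ?_, ?_, by abel⟩ <;>
  · simp only [mink_sub_left, mink_smul_left, α, β, mink_comm y2 y1]
    field_simp
    unfold gram2
    ring

/-- If `det_{y1,y2} ≠ 0`, then `det_{y1,y2,y3} = 0` iff
`y3 = α y1 + β y2 + ℓ` for some reals `α, β` and a lightlike `ℓ` orthogonal to `y1, y2`. -/
theorem gram3_eq_zero_iff (y1 y2 y3 : Fin 4 → ℝ) (h : gram2 y1 y2 ≠ 0) :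
    gram3 y1 y2 y3 = 0 ↔
      ∃ (α β : ℝ) (ℓ : Fin 4 → ℝ), mink ℓ ℓ = 0 ∧ mink ℓ y1 = 0 ∧ mink ℓ y2 = 0 ∧
        y3 = α • y1 + β • y2 + ℓ := by
  constructor
  · intro hg
    obtain ⟨α, β, ℓ, h1, h2, rfl⟩ := exists_eq_add_orthogonal h y3
    rw [gram3_add_orthogonal α β h1 h2] at hg
    exact ⟨α, β, ℓ, (mul_eq_zero.mp hg).resolve_left h, h1, h2, rfl⟩
  · rintro ⟨α, β, ℓ, hℓ, h1, h2, rfl⟩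
    rw [gram3_add_orthogonal α β h1 h2, hℓ, mul_zero]
end

section
/- Let $x,e_1,e_2\in\mathbb{R}^{1,3}$ with $e_1^2=e_2^2=-1$ (spacelike unit vectors). Then all four Gram determinants $\det_{x,e_1,e_2}$, $\det_{x,e_1}$, $\det_{x,e_2}$, $\det_{e_1,e_2}$ vanish simultaneously if and only if either (a) $e_1=\pm e_2$ and $x=\alpha e_1+\ell$ for some $\alpha\in\mathbb{R}$ and lightlike $\ell$ with $(e_1\ell)=0$, or (b) $e_2=\alpha' e_1+\ell'$ for some $\alpha'\in\mathbb{R}$ and lightlike $\ell'\neq 0$ with $(e_1\ell')=0$, and $x=\alpha_1 e_1+\alpha_2 e_2$ for some $\alpha_1,\alpha_2\in\mathbb{R}$. In either case, $\{x,e_1,e_2\}$ is linearly dependent. -/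
lemma mink_comm_s9 (a b : Fin 4 → ℝ) : mink a b = mink b a := by simp [mink]; ring
lemma mink_addL (a b y : Fin 4 → ℝ) : mink (a + b) y = mink a y + mink b y := by
  simp [mink, Pi.add_apply]; ring
lemma mink_addR (y a b : Fin 4 → ℝ) : mink y (a + b) = mink y a + mink y b := by
  simp [mink, Pi.add_apply]; ring
lemma mink_smulL (c : ℝ) (a y : Fin 4 → ℝ) : mink (c • a) y = c * mink a y := by
  simp [mink, Pi.smul_apply]; ring
lemma mink_smulR (c : ℝ) (y a : Fin 4 → ℝ) : mink y (c • a) = c * mink y a := by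
  simp [mink, Pi.smul_apply]; ring
lemma mink_negL (a y : Fin 4 → ℝ) : mink (-a) y = - mink a y := by
  simp [mink, Pi.neg_apply]; ring
lemma mink_negR (y a : Fin 4 → ℝ) : mink y (-a) = - mink y a := by
  simp [mink, Pi.neg_apply]; ring

lemma light_parallel (u v : Fin 4 → ℝ) (hu : mink u u = 0) (hv : mink v v = 0)
    (huv : mink u v = 0) (hvne : v ≠ 0) : ∃ c : ℝ, u = c • v := by
  simp only [mink] at hu hv huv
  have hv0 : v 0 ≠ 0 := by
    intro h0
    apply hvne
    have e1 : v 1 = 0 := by nlinarith [sq_nonneg (v 1), sq_nonneg (v 2), sq_nonneg (v 3)]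
    have e2 : v 2 = 0 := by nlinarith [sq_nonneg (v 1), sq_nonneg (v 2), sq_nonneg (v 3)]
    have e3 : v 3 = 0 := by nlinarith [sq_nonneg (v 1), sq_nonneg (v 2), sq_nonneg (v 3)]
    funext i; fin_cases i <;> simp only [Pi.zero_apply] <;> assumption
  set c := u 0 / v 0 with hc
  have h0 : u 0 = c * v 0 := by rw [hc, div_mul_cancel₀ _ hv0]
  have h0' : u 0 - c * v 0 = 0 := by rw [h0]; ring
  have key : (u 1 - c * v 1)^2 + (u 2 - c * v 2)^2 + (u 3 - c * v 3)^2 = 0 := by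
    linear_combination (-1) * hu + 2*c*huv - c^2*hv + (u 0 - c * v 0) * h0'
  have sq1 : (u 1 - c * v 1)^2 = 0 := by
    linarith [sq_nonneg (u 1 - c * v 1), sq_nonneg (u 2 - c * v 2), sq_nonneg (u 3 - c * v 3)]
  have sq2 : (u 2 - c * v 2)^2 = 0 := by
    linarith [sq_nonneg (u 1 - c * v 1), sq_nonneg (u 2 - c * v 2), sq_nonneg (u 3 - c * v 3)]
  have sq3 : (u 3 - c * v 3)^2 = 0 := by
    linarith [sq_nonneg (u 1 - c * v 1), sq_nonneg (u 2 - c * v 2), sq_nonneg (u 3 - c * v 3)]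
  have k1 : u 1 = c * v 1 := by have := sq_eq_zero_iff.mp sq1; linarith
  have k2 : u 2 = c * v 2 := by have := sq_eq_zero_iff.mp sq2; linarith
  have k3 : u 3 = c * v 3 := by have := sq_eq_zero_iff.mp sq3; linarith
  refine ⟨c, ?_⟩
  funext i
  fin_cases i <;> simp only [Pi.smul_apply, smul_eq_mul, Fin.isValue] <;> assumption

/-- Classification of the configurations `(x, e1, e2)` with spacelike unit vectors
`e1² = e2² = −1` where all four Gram determinants vanish simultaneously; in either
case `{x, e1, e2}` is linearly dependent. -/
theorem all_grams_vanish_iff (x e1 e2 : Fin 4 → ℝ)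
    (h1 : mink e1 e1 = -1) (h2 : mink e2 e2 = -1) :
    ((gram3 x e1 e2 = 0 ∧ gram2 x e1 = 0 ∧ gram2 x e2 = 0 ∧ gram2 e1 e2 = 0) ↔
      (((e1 = e2 ∨ e1 = -e2) ∧
          ∃ (α : ℝ) (ℓ : Fin 4 → ℝ), mink ℓ ℓ = 0 ∧ mink e1 ℓ = 0 ∧ x = α • e1 + ℓ) ∨
        (∃ (α' : ℝ) (ℓ' : Fin 4 → ℝ), ℓ' ≠ 0 ∧ mink ℓ' ℓ' = 0 ∧ mink e1 ℓ' = 0 ∧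
            e2 = α' • e1 + ℓ' ∧ ∃ α₁ α₂ : ℝ, x = α₁ • e1 + α₂ • e2))) ∧
    ((gram3 x e1 e2 = 0 ∧ gram2 x e1 = 0 ∧ gram2 x e2 = 0 ∧ gram2 e1 e2 = 0) →
      ¬ LinearIndependent ℝ ![x, e1, e2]) := by
  have main : (gram3 x e1 e2 = 0 ∧ gram2 x e1 = 0 ∧ gram2 x e2 = 0 ∧ gram2 e1 e2 = 0) →
      (((e1 = e2 ∨ e1 = -e2) ∧
          ∃ (α : ℝ) (ℓ : Fin 4 → ℝ), mink ℓ ℓ = 0 ∧ mink e1 ℓ = 0 ∧ x = α • e1 + ℓ) ∨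
        (∃ (α' : ℝ) (ℓ' : Fin 4 → ℝ), ℓ' ≠ 0 ∧ mink ℓ' ℓ' = 0 ∧ mink e1 ℓ' = 0 ∧
            e2 = α' • e1 + ℓ' ∧ ∃ α₁ α₂ : ℝ, x = α₁ • e1 + α₂ • e2)) := by
    rintro ⟨hg3, hgx1, hgx2, hg12⟩
    unfold gram3 at hg3
    unfold gram2 at hgx1 hgx2 hg12
    obtain ⟨ε, hε⟩ : ∃ t, mink e1 e2 = t := ⟨_, rfl⟩
    obtain ⟨a, ha⟩ : ∃ t, mink x e1 = t := ⟨_, rfl⟩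
    obtain ⟨b, hb⟩ : ∃ t, mink x e2 = t := ⟨_, rfl⟩
    rw [h1, h2, hε, ha, hb] at hg3
    rw [h1, ha] at hgx1
    rw [h2, hb] at hgx2
    rw [h1, h2, hε] at hg12
    have hε2 : ε ^ 2 = 1 := by linarith
    have hsum : (a + ε * b) ^ 2 = 0 := by
      linear_combination hg3 + (b ^ 2 + mink x x) * hε2
    have hab : a + ε * b = 0 := sq_eq_zero_iff.mp hsum
    have hbval : b = -(ε * a) := by linear_combination ε * hab - b * hε2
    have hle1 : mink e1 (x + a • e1) = 0 := by
      simp only [mink_addR, mink_smulR, h1, mink_comm_s9 e1 x, ha]; ring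
    have hll : mink (x + a • e1) (x + a • e1) = 0 := by
      simp only [mink_addL, mink_addR, mink_smulL, mink_smulR, h1,
        mink_comm_s9 e1 x, ha, hb]
      linear_combination (-1) * hgx1
    have hl'e1 : mink e1 (e2 + ε • e1) = 0 := by
      simp only [mink_addR, mink_smulR, h1, hε]; ring
    have hl'l' : mink (e2 + ε • e1) (e2 + ε • e1) = 0 := by
      simp only [mink_addL, mink_addR, mink_smulL, mink_smulR, h1, h2,
        mink_comm_s9 e2 e1, hε]
      linear_combination hε2
    have hll' : mink (x + a • e1) (e2 + ε • e1) = 0 := by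
      simp only [mink_addL, mink_addR, mink_smulL, mink_smulR, h1,
        mink_comm_s9 e1 x, mink_comm_s9 e2 x, mink_comm_s9 e2 e1, ha, hb, hε]
      linear_combination hbval
    have hxdecomp : x = (-a) • e1 + (x + a • e1) := by
      funext i; simp only [Pi.add_apply, Pi.smul_apply, smul_eq_mul]; ring
    by_cases hz : e2 + ε • e1 = 0
    · have hεcase : ε = 1 ∨ ε = -1 := by
        rcases mul_eq_zero.mp (show (ε - 1) * (ε + 1) = 0 by linear_combination hε2) with h | h
        · left; linarith
        · right; linarith
      refine Or.inl ⟨?_, -a, x + a • e1, hll, hle1, hxdecomp⟩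
      rcases hεcase with h | h
      · right
        funext i
        have hzi := congrFun hz i
        simp only [Pi.add_apply, Pi.smul_apply, smul_eq_mul, Pi.zero_apply, Pi.neg_apply, h] at hzi ⊢
        linarith
      · left
        funext i
        have hzi := congrFun hz i
        simp only [Pi.add_apply, Pi.smul_apply, smul_eq_mul, Pi.zero_apply, h] at hzi
        linarith
    · obtain ⟨c, hc⟩ := light_parallel (x + a • e1) (e2 + ε • e1) hll hl'l' hll' hz
      refine Or.inr ⟨-ε, e2 + ε • e1, hz, hl'l', hl'e1, ?_, c * ε - a, c, ?_⟩
      · funext i; simp only [Pi.add_apply, Pi.smul_apply, smul_eq_mul, Pi.neg_apply,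
          neg_smul]; ring
      · funext i
        have hci := congrFun hc i
        simp only [Pi.add_apply, Pi.smul_apply, smul_eq_mul] at hci ⊢
        linear_combination hci
  have rev : (((e1 = e2 ∨ e1 = -e2) ∧
          ∃ (α : ℝ) (ℓ : Fin 4 → ℝ), mink ℓ ℓ = 0 ∧ mink e1 ℓ = 0 ∧ x = α • e1 + ℓ) ∨
        (∃ (α' : ℝ) (ℓ' : Fin 4 → ℝ), ℓ' ≠ 0 ∧ mink ℓ' ℓ' = 0 ∧ mink e1 ℓ' = 0 ∧
            e2 = α' • e1 + ℓ' ∧ ∃ α₁ α₂ : ℝ, x = α₁ • e1 + α₂ • e2)) →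
      (gram3 x e1 e2 = 0 ∧ gram2 x e1 = 0 ∧ gram2 x e2 = 0 ∧ gram2 e1 e2 = 0) := by
    rintro (⟨he, α, ℓ, hℓℓ, he1ℓ, hx⟩ | ⟨α', ℓ', hne, hℓ'ℓ', he1ℓ', he2eq, α₁, α₂, hx⟩)
    · subst hx
      rcases he with he | he
      · subst he
        refine ⟨?_, ?_, ?_, ?_⟩ <;>
          · simp only [gram3, gram2, mink_addL, mink_addR, mink_smulL, mink_smulR,
              mink_comm_s9 ℓ e1, h1, hℓℓ, he1ℓ]
            ring
      · have hone : mink e2 ℓ = 0 := by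
          have h' := he1ℓ; rw [he, mink_negL] at h'; linarith
        subst he
        refine ⟨?_, ?_, ?_, ?_⟩ <;>
          · simp only [gram3, gram2, mink_addL, mink_addR, mink_smulL, mink_smulR,
              mink_negL, mink_negR, mink_comm_s9 ℓ e2, h2, hℓℓ, hone]
            ring
    · have hε : mink e1 e2 = -α' := by
        rw [he2eq, mink_addR, mink_smulR, h1, he1ℓ']; ring
      have hα'2 : α' ^ 2 = 1 := by
        have h2' := h2
        rw [he2eq] at h2'
        simp only [mink_addL, mink_addR, mink_smulL, mink_smulR, h1,
          mink_comm_s9 ℓ' e1, he1ℓ', hℓ'ℓ'] at h2'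
        linear_combination (-1) * h2'
      subst hx
      have hcase : α' = 1 ∨ α' = -1 := by
        rcases mul_eq_zero.mp (show (α' - 1) * (α' + 1) = 0 by linear_combination hα'2) with h | h
        · left; linarith
        · right; linarith
      rcases hcase with h | h <;> subst h <;>
        · refine ⟨?_, ?_, ?_, ?_⟩ <;>
            · simp only [gram3, gram2, mink_addL, mink_addR, mink_smulL, mink_smulR,
                mink_comm_s9 e2 e1, h1, h2, hε]
              ring
  refine ⟨⟨main, rev⟩, ?_⟩
  intro hg hli
  rw [Fintype.linearIndependent_iff] at hli
  rcases main hg with ⟨he, _⟩ | ⟨_, _, _, _, _, _, α₁, α₂, hx⟩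
  · rcases he with he | he
    · have := hli ![0, 1, -1] ?_ 1
      · norm_num at this
      · simp [Fin.sum_univ_three, he]
    · have := hli ![0, 1, 1] ?_ 1
      · norm_num at this
      · simp [Fin.sum_univ_three, he]
  · have := hli ![1, -α₁, -α₂] ?_ 0
    · norm_num at this
    · simp only [Fin.sum_univ_three, Matrix.cons_val_zero, Matrix.cons_val_one,
        Matrix.head_cons, Matrix.cons_val_two, Matrix.tail_cons, hx, one_smul, neg_smul]
      module
end
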